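/- arXiv:2512.14948 — 3 statements merged into one kernel-verified Lean document; each statement's English description precedes it below -/
import Mathlib

section
/- Let n ≥ 2 and a, b ≥ 3 be integers and let e be a primitive n-th root of unity. Suppose e^(a+b−1) = 1, (e^(a−2) − 1)(e^a − 1) = 0, and (e^b − 1)(e^(b−2) − 1) = 0. Then n = 3, and 3 divides a − 2, and 3 divides b − 2. -/
/-!
Each hypothesis says that `n` divides an exponent: `n ∣ a + b - 1`, `n ∣ a - 2` or `n ∣ a`,
and `n ∣ b` or `n ∣ b - 2`. In three of the four cases the two chosen exponents add up to
within `1` of `a + b - 1`, forcing `n = 1`. In the remaining case they add up to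
`(a + b - 1) - 3`, so `n ∣ 3`, hence `n = 3`.
-/

theorem IsPrimitiveRoot.dvd_or_dvd_of_mul_eq_zero {R : Type*} [CommRing R] [NoZeroDivisors R]
    {ζ : R} {n i j : ℕ} (h : IsPrimitiveRoot ζ n) (hij : (ζ ^ i - 1) * (ζ ^ j - 1) = 0) :
    n ∣ i ∨ n ∣ j := by
  simpa only [mul_eq_zero, sub_eq_zero, h.pow_eq_one_iff_dvd] using hij

theorem Nat.eq_one_of_dvd_of_dvd_add_one {n x : ℕ} (h : n ∣ x) (h' : n ∣ x + 1) : n = 1 :=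
  Nat.dvd_one.mp ((Nat.dvd_add_right h).mp h')

theorem Nat.dvd_sub_two_of_dvd_add_sub_one {n a b : ℕ} (hn : n ≠ 1) (ha : 2 ≤ a)
    (hb : 2 ≤ b) (hab : n ∣ a + b - 1)
    (hA : n ∣ a - 2 ∨ n ∣ a) (hB : n ∣ b ∨ n ∣ b - 2) :
    n ∣ a - 2 ∧ n ∣ b - 2 := by
  rcases hA with hA | hA <;> rcases hB with hB | hB
  · refine absurd (eq_one_of_dvd_of_dvd_add_one (dvd_add hA hB) ?_) hn
    rwa [show a - 2 + b + 1 = a + b - 1 by omega]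
  · exact ⟨hA, hB⟩
  · refine absurd (eq_one_of_dvd_of_dvd_add_one hab ?_) hn
    rw [show a + b - 1 + 1 = a + b by omega]
    exact dvd_add hA hB
  · refine absurd (eq_one_of_dvd_of_dvd_add_one (dvd_add hA hB) ?_) hn
    rwa [show a + (b - 2) + 1 = a + b - 1 by omega]

theorem stmt_5 (n a b : ℕ) (hn : 2 ≤ n) (ha : 3 ≤ a) (hb : 3 ≤ b)
    (e : ℂ) (he : IsPrimitiveRoot e n)
    (h1 : e ^ (a + b - 1) = 1)
    (h2 : (e ^ (a - 2) - 1) * (e ^ a - 1) = 0)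
    (h3 : (e ^ b - 1) * (e ^ (b - 2) - 1) = 0) :
    n = 3 ∧ 3 ∣ a - 2 ∧ 3 ∣ b - 2 := by
  have hab : n ∣ a + b - 1 := (he.pow_eq_one_iff_dvd _).mp h1
  obtain ⟨hA, hB⟩ := Nat.dvd_sub_two_of_dvd_add_sub_one (by omega) (by omega) (by omega) hab
    (he.dvd_or_dvd_of_mul_eq_zero h2) (he.dvd_or_dvd_of_mul_eq_zero h3)
  have hn3 : n ∣ 3 :=
    (Nat.dvd_add_right (dvd_add hA hB)).mp (by rwa [show a - 2 + (b - 2) + 3 = a + b - 1 by omega])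
  obtain rfl : n = 3 := ((Nat.dvd_prime Nat.prime_three).mp hn3).resolve_left (by omega)
  exact ⟨rfl, hA, hB⟩
end

section
/- Let a ≥ 3 and b ≥ 1 be integers and let e be a primitive (a−1)·b-th root of unity. Suppose integers i, j satisfy 0 ≤ i ≤ a, 0 ≤ j ≤ b, and e^(i·b) = e^j. Then (i, j) is one of (0,0), (a−1,0), (1,b), (a,b). -/
/-!
Writing `N = (a - 1) * b` for the order of `e`, the hypothesis says `i * b ≡ j [MOD N]`.
Since `j ≤ b < N` and `i * b ≤ a * b < 2 * N` (this is where `a ≥ 3` enters), either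
`i * b = j` or `i * b = j + N`. In the first case `i * b ≤ b` forces `i ≤ 1`; in the second
`i * b ≥ (a - 1) * b` forces `i ∈ {a - 1, a}`, and `j` is then determined.
-/

theorem IsPrimitiveRoot.pow_eq_pow_iff_modEq {M : Type*} [CommMonoid M] {ζ : M} {k : ℕ}
    (hζ : IsPrimitiveRoot ζ k) (hk : 0 < k) {m n : ℕ} : ζ ^ m = ζ ^ n ↔ m ≡ n [MOD k] := by
  have hfin : IsOfFinOrder ζ := isOfFinOrder_iff_pow_eq_one.mpr ⟨k, hk, hζ.pow_eq_one⟩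
  rw [hfin.pow_eq_pow_iff_modEq, ← hζ.eq_orderOf]

theorem Nat.eq_or_eq_add_of_modEq_of_lt {N m n : ℕ} (h : m ≡ n [MOD N]) (hn : n < N)
    (hm : m < 2 * N) : m = n ∨ m = n + N := by
  have hmod : m % N = n := Eq.trans h (Nat.mod_eq_of_lt hn)
  have hdiv : m / N < 2 := Nat.div_lt_of_lt_mul (by omega)
  have hsplit : N * (m / N) + n = m := hmod ▸ Nat.div_add_mod m N
  interval_cases m / N <;> omega

theorem stmt_11 (a b : ℕ) (ha : 3 ≤ a) (hb : 1 ≤ b)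
    (e : ℂ) (he : IsPrimitiveRoot e ((a - 1) * b))
    (i j : ℕ) (hi : i ≤ a) (hj : j ≤ b) (h : e ^ (i * b) = e ^ j) :
    (i, j) = (0, 0) ∨ (i, j) = (a - 1, 0) ∨ (i, j) = (1, b) ∨ (i, j) = (a, b) := by
  have hN : (a - 1) * b = a * b - b := Nat.sub_one_mul a b
  have hab : 3 * b ≤ a * b := Nat.mul_le_mul_right b ha
  have hmod : i * b ≡ j [MOD (a - 1) * b] :=
    (he.pow_eq_pow_iff_modEq (by omega)).mp h
  have hib : i * b ≤ a * b := Nat.mul_le_mul_right b hi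
  rcases Nat.eq_or_eq_add_of_modEq_of_lt hmod (by omega) (by omega) with hij | hij
  · have hi1 : i ≤ 1 := Nat.le_of_mul_le_mul_right (by omega : i * b ≤ 1 * b) hb
    interval_cases i <;> simp_all
  · have hai : a - 1 ≤ i := Nat.le_of_mul_le_mul_right (by omega : (a - 1) * b ≤ i * b) hb
    obtain rfl | rfl : i = a - 1 ∨ i = a := by omega
    · have hj0 : j = 0 := by omega
      simp [hj0]
    · have hjb : j = b := by rw [hN] at hij; omega
      simp [hjb]
end

section
/- Let a, b ≥ 3 be integers, set N = (a−1)(b−1) + 1, and let e be a primitive N-th root of unity. Suppose integers i, j satisfy 0 ≤ i ≤ a, 0 ≤ j ≤ b, and e^((i−1)(b−1) + j) = 1. Then (i, j) is one of (0, b−1), (1, 0), (a−1, b), (a, 1). -/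
lemma Int.eq_zero_or_eq_of_dvd_of_neg_lt_of_lt_two_mul {n k : ℤ} (hdvd : n ∣ k) (hlo : -n < k)
    (hhi : k < 2 * n) : k = 0 ∨ k = n := by
  obtain ⟨m, rfl⟩ := hdvd
  have hn : 0 < n := by linarith
  have hm0 : -1 < m := lt_of_mul_lt_mul_left (by linarith) hn.le
  have hm2 : m < 2 := lt_of_mul_lt_mul_left (by linarith) hn.le
  interval_cases m <;> simp

lemma pair_eq_of_sub_one_mul_add_eq_zero {b i j : ℤ} (hb : 2 ≤ b) (hi : 0 ≤ i) (hj : 0 ≤ j)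
    (h : (i - 1) * (b - 1) + j = 0) : (i, j) = (0, b - 1) ∨ (i, j) = (1, 0) := by
  have hi1 : i ≤ 1 := by nlinarith
  obtain rfl | rfl : i = 0 ∨ i = 1 := by omega
  · obtain rfl : j = b - 1 := by linarith
    exact .inl rfl
  · obtain rfl : j = 0 := by linarith
    exact .inr rfl

/-- The involution `(i, j) ↦ (a - i, b - j)` of the box `[0, a] × [0, b]` turns the exponent
`k = (i - 1) (b - 1) + j` into `(a - 1) (b - 1) + 1 - k`. -/
lemma pair_eq_of_sub_one_mul_add_eq {a b i j : ℤ} (hb : 2 ≤ b) (hia : i ≤ a) (hjb : j ≤ b)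
    (h : (i - 1) * (b - 1) + j = (a - 1) * (b - 1) + 1) :
    (i, j) = (a - 1, b) ∨ (i, j) = (a, 1) := by
  have h' : (a - i - 1) * (b - 1) + (b - j) = 0 := by linear_combination -h
  rcases pair_eq_of_sub_one_mul_add_eq_zero hb (by linarith) (by linarith) h' with h0 | h0 <;>
    simp only [Prod.mk.injEq] at h0 ⊢ <;> omega

theorem stmt_12 (a b : ℤ) (ha : 3 ≤ a) (hb : 3 ≤ b)
    (e : ℂ) (he : IsPrimitiveRoot e ((a - 1) * (b - 1) + 1).toNat)
    (i j : ℤ) (hi0 : 0 ≤ i) (hia : i ≤ a) (hj0 : 0 ≤ j) (hjb : j ≤ b)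
    (h : e ^ ((i - 1) * (b - 1) + j) = 1) :
    (i, j) = (0, b - 1) ∨ (i, j) = (1, 0) ∨ (i, j) = (a - 1, b) ∨ (i, j) = (a, 1) := by
  have hdvd : (a - 1) * (b - 1) + 1 ∣ (i - 1) * (b - 1) + j := by
    have hN : 0 ≤ (a - 1) * (b - 1) + 1 := by nlinarith
    simpa [Int.toNat_of_nonneg hN] using (he.zpow_eq_one_iff_dvd _).mp h
  -- `-(b - 1) ≤ (i - 1) (b - 1) + j ≤ (a - 1) (b - 1) + b`, strictly between `-N` and `2N`.
  rcases Int.eq_zero_or_eq_of_dvd_of_neg_lt_of_lt_two_mul hdvd (by nlinarith) (by nlinarith)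
    with h0 | hN
  · rcases pair_eq_of_sub_one_mul_add_eq_zero (by omega) hi0 hj0 h0 with h' | h' <;> simp [h']
  · rcases pair_eq_of_sub_one_mul_add_eq (by omega) hia hjb hN with h' | h' <;> simp [h']
end
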